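/- arXiv:math/0406171 — 4 statements merged into one kernel-verified Lean document; each statement's English description precedes it below -/
import Mathlib

section
/- Let Δ ⊆ M_ℝ be a reflexive polytope with nef-partition Δ = Δ₁ + ⋯ + Δ_r, with piecewise linear decomposition φ = φ₁ + ⋯ + φ_r on the normal fan Σ, and let ∇_i be the convex hull of 0 and all primitive ray generators e_j of Σ with φ_i(e_j) = 1. Then for all i, j and all m ∈ Δ_j, n ∈ ∇_i, one has ⟨m, n⟩ ≥ -δ_{ij} (Kronecker delta). -/
open scoped Pointwise

namespace BB

abbrev V (n : ℕ) : Type := Fin n → ℝ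

/-- The standard pairing between `M_ℝ` and `N_ℝ` (both identified with `ℝⁿ`). -/
def pair {n : ℕ} (m v : V n) : ℝ := ∑ i, m i * v i

/-- A point of `ℝⁿ` is a lattice point if all its coordinates are integers. -/
def IsLatticePt {n : ℕ} (m : V n) : Prop := ∀ i, ∃ z : ℤ, m i = (z : ℝ)

/-- A lattice polytope: convex hull of finitely many lattice points. -/
def IsLatticePolytope {n : ℕ} (P : Set (V n)) : Prop :=
  ∃ S : Finset (V n), (∀ m ∈ S, IsLatticePt m) ∧ P = convexHull ℝ (S : Set (V n))

/-- The polar dual `P* = {v | ⟨m,v⟩ ≥ -1 for all m ∈ P}`. -/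
def polar {n : ℕ} (P : Set (V n)) : Set (V n) := {v | ∀ m ∈ P, -1 ≤ pair m v}

/-- A reflexive polytope: a lattice polytope with `0` in its interior whose polar
dual is again a lattice polytope. -/
def IsReflexive {n : ℕ} (P : Set (V n)) : Prop :=
  IsLatticePolytope P ∧ (0 : V n) ∈ interior P ∧ IsLatticePolytope (polar P)

/-- The support function `supp P v = -inf{⟨m,v⟩ | m ∈ P}`; for `P = Δᵢ` and `v ∈ N_ℝ`
this is the piecewise linear function `φᵢ(v)` of the nef-partition. -/
noncomputable def supp {n : ℕ} (P : Set (V n)) (v : V n) : ℝ :=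
  sSup ((fun m => -(pair m v)) '' P)

end BB

/-!
For a vertex `e` of `Δ*` with `φᵢ(e) = 1`, the minimizers of `⟨·, e⟩` on the summands `Δₖ`
add up to a point of `Δ`, so `∑ₖ φₖ(e) ≤ 1`; as every `φₖ(e)` is `0` or `1`, this forces
`φⱼ(e) = 0` for `j ≠ i`. Hence `⟨m, e⟩ ≥ -φⱼ(e) ≥ -δᵢⱼ` for `m ∈ Δⱼ`, and the bound passes to
`∇ᵢ` because it defines a half-space containing `0` and the generators of `∇ᵢ`.
-/

namespace BB

open Matrix

variable {n : ℕ}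

lemma pair_eq_dotProduct (m v : V n) : pair m v = m ⬝ᵥ v := rfl

lemma isLinearMap_pair (m : V n) : IsLinearMap ℝ (pair m) :=
  ⟨dotProduct_add m, fun c v => dotProduct_smul c m v⟩

lemma continuous_neg_pair_left (v : V n) : Continuous fun m : V n => -pair m v :=
  (continuous_id.dotProduct continuous_const).neg

lemma IsLatticePolytope.isCompact {P : Set (V n)} (hP : IsLatticePolytope P) : IsCompact P := by
  obtain ⟨S, -, rfl⟩ := hP
  exact S.finite_toSet.isCompact_convexHull ℝ

lemma neg_supp_le_pair {P : Set (V n)} (hP : IsCompact P) {m : V n} (hm : m ∈ P) (v : V n) :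
    -supp P v ≤ pair m v := by
  have hbdd := hP.bddAbove_image (continuous_neg_pair_left v).continuousOn
  have hle : -pair m v ≤ supp P v := le_csSup hbdd (Set.mem_image_of_mem _ hm)
  linarith

lemma exists_supp_eq {P : Set (V n)} (hP : IsCompact P) (hne : P.Nonempty) (v : V n) :
    ∃ x ∈ P, supp P v = -pair x v := by
  obtain ⟨x, hxP, hmax⟩ := hP.exists_isMaxOn hne (continuous_neg_pair_left v).continuousOn
  refine ⟨x, hxP, IsGreatest.csSup_eq ⟨Set.mem_image_of_mem _ hxP, ?_⟩⟩
  rintro _ ⟨m, hm, rfl⟩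
  exact hmax hm

lemma nonempty_of_sum_nonempty {ι α : Type*} [Fintype ι] [AddCommMonoid α] {P : ι → Set α}
    (h : (∑ k, P k).Nonempty) (k : ι) : (P k).Nonempty := by
  obtain ⟨a, ha⟩ := h
  obtain ⟨g, hg, -⟩ := (Set.mem_fintype_sum P a).1 ha
  exact ⟨g k, hg k⟩

section MinkowskiSum

variable {ι : Type*} [Fintype ι] {P : ι → Set (V n)}

lemma sum_supp_le_one_of_mem_polar (hP : ∀ k, IsCompact (P k)) (hne : ∀ k, (P k).Nonempty)
    {w : V n} (hw : w ∈ polar (∑ k, P k)) : ∑ k, supp (P k) w ≤ 1 := by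
  choose x hxP hx using fun k => exists_supp_eq (hP k) (hne k) w
  have hsum : ∑ k, x k ∈ ∑ k, P k := (Set.mem_fintype_sum P _).2 ⟨x, hxP, rfl⟩
  have hpolar := hw _ hsum
  rw [pair_eq_dotProduct, sum_dotProduct] at hpolar
  simp only [hx, Finset.sum_neg_distrib, pair_eq_dotProduct]
  linarith

lemma supp_le_ite_of_nef [DecidableEq ι] (hP : ∀ k, IsCompact (P k))
    (hne : ∀ k, (P k).Nonempty) {w : V n} (hw : w ∈ polar (∑ k, P k))
    (hnef : ∀ k, supp (P k) w = 0 ∨ supp (P k) w = 1) {i : ι} (hi : supp (P i) w = 1) (j : ι) :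
    supp (P j) w ≤ if i = j then 1 else 0 := by
  have hle := sum_supp_le_one_of_mem_polar hP hne hw
  split_ifs with hij
  · rcases hnef j with h | h <;> linarith
  · have hnonneg : ∀ k ∈ Finset.univ, 0 ≤ supp (P k) w := fun k _ => by
      rcases hnef k with h | h <;> linarith
    have := Finset.add_le_sum hnonneg (Finset.mem_univ i) (Finset.mem_univ j) hij
    linarith

end MinkowskiSum

theorem stmt0 {n r : ℕ} (Δ : Set (V n)) (D : Fin r → Set (V n))
    (hΔrefl : IsReflexive Δ)
    (hDlat : ∀ i, IsLatticePolytope (D i))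
    (hΔ : Δ = ∑ i, D i)
    (E : Finset (V n))
    (hE : (E : Set (V n)) = Set.extremePoints ℝ (polar Δ))
    (hnef : ∀ i, ∀ e ∈ E, supp (D i) e = 0 ∨ supp (D i) e = 1)
    (Nb : Fin r → Set (V n))
    (hNb : ∀ i, Nb i = convexHull ℝ ({0} ∪ {e : V n | e ∈ E ∧ supp (D i) e = 1})) :
    ∀ i j : Fin r, ∀ m ∈ D j, ∀ v ∈ Nb i,
      -(if i = j then (1:ℝ) else 0) ≤ pair m v := by
  intro i j m hm v hv
  have hcpt : ∀ k, IsCompact (D k) := fun k => (hDlat k).isCompact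
  have hne : ∀ k, (D k).Nonempty :=
    nonempty_of_sum_nonempty (hΔ ▸ ⟨0, interior_subset hΔrefl.2.1⟩)
  rw [hNb i] at hv
  refine convexHull_min ?_ (convex_halfSpace_ge (isLinearMap_pair m) _) hv
  rintro w (rfl | ⟨hwE, hw1⟩)
  · show _ ≤ pair m 0
    rw [pair_eq_dotProduct, dotProduct_zero]
    split_ifs <;> norm_num
  · have hwpolar : w ∈ polar (∑ k, D k) := hΔ ▸ extremePoints_subset (hE ▸ Finset.mem_coe.2 hwE)
    have hsupp := supp_le_ite_of_nef hcpt hne hwpolar (fun k => hnef k w hwE) hw1 j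
    have hpair := neg_supp_le_pair (hcpt j) hm w
    show _ ≤ pair m w
    linarith

end BB
end

section
/- In the nef-partition setting, if v is a vertex of P_∇ written v = v₁ + ⋯ + v_r with v_j primitive ray generators of Σ satisfying φ_i(v_j) = δ_{ij}, and σ̌ is a maximal cell of P_∇ containing v with affine span A_σ̌ = {x ∈ N_ℝ | ⟨m_i, x⟩ = 1, i=1,…,r} (where m_i ∈ M defines φ_i on C(σ*)), then A_σ̌ ∩ Span(v₁,…,v_r) = {v}, and the projection A_σ̌ → N_ℝ/Span(v₁,…,v_r) is an affine isomorphism mapping A_σ̌ ∩ N isomorphically onto N/(Span(v₁,…,v_r) ∩ N). -/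
/-!
Since `φᵢ(vⱼ) = δᵢⱼ` and `mᵢ` agrees with `φᵢ` on the face containing the `vⱼ`, the functionals
`mᵢ` and the vectors `vⱼ` are biorthogonal: `⟨mᵢ, vⱼ⟩ = δᵢⱼ`. Hence a point `∑ cⱼ vⱼ` of the span
has coordinates `cᵢ = ⟨mᵢ, ∑ cⱼ vⱼ⟩`, which forces `cᵢ = 1` on `A_σ̌` and `cᵢ = 0` for a difference of
two points of `A_σ̌`. Conversely `w ↦ w + ∑ᵢ (1 - ⟨mᵢ, w⟩) vᵢ` moves any `w` into `A_σ̌` along the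
span; it preserves lattice points because the `mᵢ` and the vertices `vᵢ` of the reflexive polytope
`Δ*` are integral.
-/

open scoped Pointwise

namespace BB

/-- `F` is a face of the convex set `P` (an exposed subset). -/
def IsFaceOf {n : ℕ} (F P : Set (V n)) : Prop := IsExposed ℝ P F

section Biorthogonal

variable {R E ι : Type*} [CommRing R] [AddCommGroup E] [Module R E] [Fintype ι]
  {f : ι → E →ₗ[R] R} {v : ι → E}

def levelRetraction (f : ι → E →ₗ[R] R) (v : ι → E) (w : E) : E :=
  w + ∑ i, (1 - f i w) • v i

lemma mkQ_levelRetraction (w : E) :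
    (Submodule.span R (Set.range v)).mkQ (levelRetraction f v w)
      = (Submodule.span R (Set.range v)).mkQ w := by
  rw [Submodule.mkQ_apply, Submodule.mkQ_apply, Submodule.Quotient.eq, levelRetraction,
    add_sub_cancel_left]
  exact Submodule.sum_mem _ fun i _ => Submodule.smul_mem _ _ (Submodule.subset_span ⟨i, rfl⟩)

variable [DecidableEq ι]

lemma apply_sum_smul_of_biorthogonal (hfv : ∀ i j, f i (v j) = if i = j then 1 else 0)
    (c : ι → R) (i : ι) : f i (∑ j, c j • v j) = c i := by
  simp [hfv]

lemma eq_sum_smul_of_mem_span_of_biorthogonal (hfv : ∀ i j, f i (v j) = if i = j then 1 else 0)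
    {x : E} (hx : x ∈ Submodule.span R (Set.range v)) : x = ∑ j, f j x • v j := by
  obtain ⟨c, rfl⟩ := (Submodule.mem_span_range_iff_exists_fun R).mp hx
  simp only [apply_sum_smul_of_biorthogonal hfv]

lemma levelSet_inter_span_of_biorthogonal (hfv : ∀ i j, f i (v j) = if i = j then 1 else 0) :
    {x | ∀ i, f i x = 1} ∩ (Submodule.span R (Set.range v) : Set E) = {∑ j, v j} := by
  ext x
  simp only [Set.mem_inter_iff, Set.mem_ofPred_eq, SetLike.mem_coe, Set.mem_singleton_iff]
  constructor
  · rintro ⟨hxA, hxW⟩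
    rw [eq_sum_smul_of_mem_span_of_biorthogonal hfv hxW]
    simp [hxA]
  · rintro rfl
    refine ⟨fun i => by simpa using apply_sum_smul_of_biorthogonal hfv (fun _ => 1) i, ?_⟩
    exact Submodule.sum_mem _ fun j _ => Submodule.subset_span ⟨j, rfl⟩

lemma injOn_mkQ_levelSet_of_biorthogonal (hfv : ∀ i j, f i (v j) = if i = j then 1 else 0) :
    Set.InjOn (Submodule.span R (Set.range v)).mkQ {x | ∀ i, f i x = 1} := by
  intro x hx y hy hxy
  rw [Submodule.mkQ_apply, Submodule.mkQ_apply, Submodule.Quotient.eq] at hxy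
  have hzero : ∀ j, f j (x - y) = 0 := fun j => by simp [hx j, hy j]
  rw [← sub_eq_zero, eq_sum_smul_of_mem_span_of_biorthogonal hfv hxy]
  simp [hzero]

lemma levelRetraction_mem_levelSet (hfv : ∀ i j, f i (v j) = if i = j then 1 else 0) (w : E) :
    levelRetraction f v w ∈ {x | ∀ i, f i x = 1} := by
  intro i
  rw [levelRetraction, map_add, apply_sum_smul_of_biorthogonal hfv]
  ring

lemma bijOn_mkQ_levelSet_of_biorthogonal (hfv : ∀ i j, f i (v j) = if i = j then 1 else 0) :
    Set.BijOn (Submodule.span R (Set.range v)).mkQ {x | ∀ i, f i x = 1} Set.univ := by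
  refine ⟨Set.mapsTo_univ _ _, injOn_mkQ_levelSet_of_biorthogonal hfv, fun q _ => ?_⟩
  obtain ⟨w, rfl⟩ := Submodule.mkQ_surjective _ q
  exact ⟨_, levelRetraction_mem_levelSet hfv w, mkQ_levelRetraction w⟩

end Biorthogonal

lemma IsLatticePt.add_sum_intCast_smul {n : ℕ} {ι : Type*} [Fintype ι] {w : V n} {u : ι → V n}
    (hw : IsLatticePt w) (hu : ∀ i, IsLatticePt (u i)) (z : ι → ℤ) :
    IsLatticePt (w + ∑ i, (z i : ℝ) • u i) := by
  choose a ha using hw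
  choose b hb using hu
  intro k
  exact ⟨a k + ∑ i, z i * b i k, by simp [ha, hb, Finset.sum_apply]⟩

lemma IsLatticePt.exists_pair_eq_intCast {n : ℕ} {m w : V n} (hm : IsLatticePt m)
    (hw : IsLatticePt w) : ∃ z : ℤ, pair m w = z := by
  choose a ha using hm
  choose b hb using hw
  exact ⟨∑ i, a i * b i, by simp [pair, ha, hb]⟩

lemma IsLatticePolytope.isLatticePt_of_mem_extremePoints {n : ℕ} {P : Set (V n)}
    (hP : IsLatticePolytope P) {x : V n} (hx : x ∈ Set.extremePoints ℝ P) : IsLatticePt x := by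
  obtain ⟨S, hSlat, rfl⟩ := hP
  exact hSlat _ (extremePoints_convexHull_subset hx)

lemma isLatticePt_levelRetraction {n : ℕ} {ι : Type*} [Fintype ι] {m v : ι → V n} {w : V n}
    (hm : ∀ i, IsLatticePt (m i)) (hv : ∀ i, IsLatticePt (v i)) (hw : IsLatticePt w) :
    IsLatticePt (levelRetraction (fun i => dotProductBilin ℝ ℝ (m i)) v w) := by
  choose z hz using fun i => (hm i).exists_pair_eq_intCast hw
  have hcoef : ∀ i, 1 - m i ⬝ᵥ w = ((1 - z i : ℤ) : ℝ) := fun i => by push_cast [← hz i]; rfl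
  simpa only [levelRetraction, dotProductBilin_apply_apply, ← hcoef] using
    hw.add_sum_intCast_smul hv (fun i => 1 - z i)

theorem stmt8_general {n r : ℕ} (Δ : Set (V n)) (D : Fin r → Set (V n))
    (hΔrefl : IsReflexive Δ)
    (E : Finset (V n))
    (hE : (E : Set (V n)) = Set.extremePoints ℝ (polar Δ))
    -- v = v₁ + ⋯ + v_r a vertex of P_∇, with vⱼ ray generators and φᵢ(vⱼ) = δᵢⱼ
    (v : Fin r → V n)
    (hv : ∀ j, v j ∈ E)
    (hvd : ∀ i j, supp (D i) (v j) = if i = j then (1:ℝ) else 0)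
    -- σ̌ a maximal cell of P_∇ containing the vertex: σ* a maximal proper face of Δ*
    -- containing all the vⱼ, and mᵢ ∈ M defining φᵢ on C(σ*)
    (σs : Set (V n))
    (hvin : ∀ j, v j ∈ σs)
    (m : Fin r → V n)
    (hmlat : ∀ i, IsLatticePt (m i))
    (hm : ∀ i, ∀ x ∈ σs, pair (m i) x = supp (D i) x)
    -- the affine span A_σ̌ = {x | ⟨mᵢ,x⟩ = 1, i = 1,…,r}
    (A : Set (V n))
    (hA : A = {x : V n | ∀ i, pair (m i) x = 1}) :
    -- A_σ̌ ∩ Span(v₁,…,v_r) = {v}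
    A ∩ (Submodule.span ℝ (Set.range v) : Set (V n)) = {∑ j, v j} ∧
    -- the projection A_σ̌ → N_ℝ/Span(v₁,…,v_r) is an affine isomorphism …
    Set.BijOn (Submodule.span ℝ (Set.range v)).mkQ A Set.univ ∧
    -- … mapping A_σ̌ ∩ N isomorphically onto N/(Span(v₁,…,v_r) ∩ N)
    (Submodule.span ℝ (Set.range v)).mkQ '' (A ∩ {x | IsLatticePt x})
      = (Submodule.span ℝ (Set.range v)).mkQ '' {x | IsLatticePt x} := by
  set f : Fin r → V n →ₗ[ℝ] ℝ := fun i => dotProductBilin ℝ ℝ (m i)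
  have hfv : ∀ i j, f i (v j) = if i = j then 1 else 0 := fun i j =>
    (hm i (v j) (hvin j)).trans (hvd i j)
  have hvlat : ∀ j, IsLatticePt (v j) := fun j =>
    hΔrefl.2.2.isLatticePt_of_mem_extremePoints (hE ▸ Finset.mem_coe.mpr (hv j))
  have hAf : A = {x | ∀ i, f i x = 1} := hA
  subst hAf
  refine ⟨levelSet_inter_span_of_biorthogonal hfv, bijOn_mkQ_levelSet_of_biorthogonal hfv,
    (Set.image_mono Set.inter_subset_right).antisymm ?_⟩
  rintro _ ⟨w, hw, rfl⟩
  exact ⟨levelRetraction f v w, ⟨levelRetraction_mem_levelSet hfv w,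
    isLatticePt_levelRetraction hmlat hvlat hw⟩, mkQ_levelRetraction w⟩

theorem stmt8 {n r : ℕ} (Δ : Set (V n)) (D : Fin r → Set (V n))
    (hΔrefl : IsReflexive Δ)
    (hDlat : ∀ i, IsLatticePolytope (D i))
    (hΔ : Δ = ∑ i, D i)
    (E : Finset (V n))
    (hE : (E : Set (V n)) = Set.extremePoints ℝ (polar Δ))
    (hnef : ∀ i, ∀ e ∈ E, supp (D i) e = 0 ∨ supp (D i) e = 1)
    (Nb : Fin r → Set (V n))
    (hNb : ∀ i, Nb i = convexHull ℝ ({0} ∪ {e : V n | e ∈ E ∧ supp (D i) e = 1}))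
    -- v = v₁ + ⋯ + v_r a vertex of P_∇, with vⱼ ray generators and φᵢ(vⱼ) = δᵢⱼ
    (v : Fin r → V n)
    (hv : ∀ j, v j ∈ E)
    (hvd : ∀ i j, supp (D i) (v j) = if i = j then (1:ℝ) else 0)
    -- σ̌ a maximal cell of P_∇ containing the vertex: σ* a maximal proper face of Δ*
    -- containing all the vⱼ, and mᵢ ∈ M defining φᵢ on C(σ*)
    (σs : Set (V n))
    (hface : IsFaceOf σs (polar Δ))
    (hproper : σs ≠ polar Δ)
    (hmaxface : Module.finrank ℝ (vectorSpan ℝ σs) = n - 1)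
    (hvin : ∀ j, v j ∈ σs)
    (hchkne : (∑ i, {x ∈ σs | supp (D i) x = 1}).Nonempty)
    (m : Fin r → V n)
    (hmlat : ∀ i, IsLatticePt (m i))
    (hm : ∀ i, ∀ x ∈ σs, pair (m i) x = supp (D i) x)
    -- the affine span A_σ̌ = {x | ⟨mᵢ,x⟩ = 1, i = 1,…,r}
    (A : Set (V n))
    (hA : A = {x : V n | ∀ i, pair (m i) x = 1}) :
    -- A_σ̌ ∩ Span(v₁,…,v_r) = {v}
    A ∩ (Submodule.span ℝ (Set.range v) : Set (V n)) = {∑ j, v j} ∧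
    -- the projection A_σ̌ → N_ℝ/Span(v₁,…,v_r) is an affine isomorphism …
    Set.BijOn (Submodule.span ℝ (Set.range v)).mkQ A Set.univ ∧
    -- … mapping A_σ̌ ∩ N isomorphically onto N/(Span(v₁,…,v_r) ∩ N)
    (Submodule.span ℝ (Set.range v)).mkQ '' (A ∩ {x | IsLatticePt x})
      = (Submodule.span ℝ (Set.range v)).mkQ '' {x | IsLatticePt x} :=
  stmt8_general Δ D hΔrefl E hE v hv hvd σs hvin m hmlat hm A hA

end BB
end

section
/- Let v = v₁+⋯+v_r and v' = v₁'+⋯+v_r' be two vertices of P_∇ contained in maximal cells σ̌ and σ̌' respectively, with m₁,…,m_r and m₁',…,m_r' ∈ M defining the functions -φ_i on the corresponding maximal faces σ, σ'. Identifying the stalk of the lattice Λ at v with N/(N ∩ Span(v₁,…,v_r)), parallel transport of the affine structure around the loop γ (from v into Int(σ̌), through v', into Int(σ̌'), back to v) is given by T_γ(n) = n + Σ_{j=1}^r ⟨m_j' - m_j, n⟩ (v_j' - v_j). -/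
open scoped Pointwise

namespace BB

lemma pair_sub_right {n : ℕ} (m a b : V n) : pair m (a - b) = pair m a - pair m b := by
  simp [pair, mul_sub, Finset.sum_sub_distrib]

lemma pair_sub_left {n : ℕ} (m m' a : V n) : pair (m - m') a = pair m a - pair m' a := by
  simp [pair, sub_mul, Finset.sum_sub_distrib]

lemma pair_sum_smul {n r : ℕ} (m : V n) (c : Fin r → ℝ) (w : Fin r → V n) :
    pair m (∑ j, c j • w j) = ∑ j, c j * pair m (w j) := by
  simp only [pair, Finset.sum_apply, Pi.smul_apply, smul_eq_mul, Finset.mul_sum]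
  rw [Finset.sum_comm]
  refine Finset.sum_congr rfl fun j _ => ?_
  exact Finset.sum_congr rfl fun i _ => by ring

/-- Monodromy computation (Proposition 2.13 of Gross, "Toric degenerations and
Batyrev–Borisov duality").  The parallel transport `T_γ` is the composition of the
four projection identifications
`N/Span(vⱼ) ← Span(mᵢ)^⊥ → N/Span(vⱼ') ← Span(mᵢ')^⊥ → N/Span(vⱼ)`;
concretely: if `z ∈ Span(mᵢ)^⊥` lifts the class of `x` mod `Span(vⱼ)`, and
`z' ∈ Span(mᵢ')^⊥` lifts the class of `z` mod `Span(vⱼ')`, then the class of `z'`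
mod `Span(vⱼ)` is `T_γ(x) = x + ∑ⱼ ⟨mⱼ' - mⱼ, x⟩ (vⱼ' - vⱼ)`. -/
theorem stmt9 {n r : ℕ}
    -- v = Σ vⱼ, v' = Σ vⱼ' the two vertices; mᵢ, mᵢ' define -φᵢ on σ, σ'
    (v v' m m' : Fin r → V n)
    (hmv : ∀ i j, pair (m i) (v j) = -(if i = j then (1:ℝ) else 0))
    (hmv' : ∀ i j, pair (m i) (v' j) = -(if i = j then (1:ℝ) else 0))
    (hm'v : ∀ i j, pair (m' i) (v j) = -(if i = j then (1:ℝ) else 0))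
    (hm'v' : ∀ i j, pair (m' i) (v' j) = -(if i = j then (1:ℝ) else 0))
    (x z z' : V n)
    -- z ∈ Span(m₁,…,m_r)^⊥ represents the class of x in N/Span(v₁,…,v_r)  (ψ₁⁻¹)
    (hz : ∀ i, pair (m i) z = 0)
    (hzx : z - x ∈ Submodule.span ℝ (Set.range v))
    -- z' ∈ Span(m₁',…,m_r')^⊥ represents the class of z in N/Span(v₁',…,v_r')  (ψ₃⁻¹ ∘ ψ₂)
    (hz' : ∀ i, pair (m' i) z' = 0)
    (hzz' : z' - z ∈ Submodule.span ℝ (Set.range v')) :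
    -- ψ₄(z') = x + ∑ⱼ ⟨mⱼ' - mⱼ, x⟩ (vⱼ' - vⱼ)  in N/Span(v₁,…,v_r)
    z' - (x + ∑ j, pair (m' j - m j) x • (v' j - v j))
      ∈ Submodule.span ℝ (Set.range v) := by
  obtain ⟨a, ha⟩ := (Submodule.mem_span_range_iff_exists_fun ℝ).1 hzx
  obtain ⟨b, hb⟩ := (Submodule.mem_span_range_iff_exists_fun ℝ).1 hzz'
  set c : Fin r → ℝ := fun j => pair (m' j) x - pair (m j) x with hc
  have ha' : ∀ i, a i = pair (m i) x := by
    intro i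
    have := congrArg (pair (m i)) ha
    rw [pair_sum_smul, pair_sub_right, hz] at this
    simp only [hmv, mul_neg, Finset.sum_neg_distrib] at this
    rw [Finset.sum_eq_single i (fun j _ hj => by simp [Ne.symm hj])
      (by simp)] at this
    simp at this
    linarith
  have hmz : ∀ i, pair (m' i) z = c i := by
    intro i
    have := congrArg (pair (m' i)) ha
    rw [pair_sum_smul, pair_sub_right] at this
    simp only [hm'v, mul_neg] at this
    rw [Finset.sum_eq_single i (fun j _ hj => by simp [Ne.symm hj])
      (by simp)] at this
    simp only [if_true, mul_one] at this
    show pair (m' i) z = pair (m' i) x - pair (m i) x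
    rw [← ha' i]; linarith
  have hb' : ∀ i, b i = c i := by
    intro i
    have := congrArg (pair (m' i)) hb
    rw [pair_sum_smul, pair_sub_right, hz' i, hmz i] at this
    simp only [hm'v', mul_neg] at this
    rw [Finset.sum_eq_single i (fun j _ hj => by simp [Ne.symm hj])
      (by simp)] at this
    simp only [if_true, mul_one] at this
    have : b i = c i := by linarith
    rw [this]
  have key : z' - (x + ∑ j, pair (m' j - m j) x • (v' j - v j))
      = ∑ j, (a j + c j) • v j := by
    have hcc : ∀ j, pair (m' j - m j) x = c j := fun j => pair_sub_left _ _ _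
    calc z' - (x + ∑ j, pair (m' j - m j) x • (v' j - v j))
        = (z - x) + (z' - z) - ∑ j, pair (m' j - m j) x • (v' j - v j) := by abel
      _ = (∑ j, a j • v j) + (∑ j, b j • v' j)
          - ∑ j, (c j • v' j - c j • v j) := by
          rw [ha, hb]
          congr 1
          exact Finset.sum_congr rfl fun j _ => by rw [hcc, smul_sub]
      _ = (∑ j, a j • v j) + (∑ j, c j • v' j)
          - ((∑ j, c j • v' j) - (∑ j, c j • v j)) := by
          rw [Finset.sum_sub_distrib]
          congr 2
          exact Finset.sum_congr rfl fun j _ => by rw [hb']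
      _ = (∑ j, a j • v j) + (∑ j, c j • v j) := by abel
      _ = ∑ j, (a j + c j) • v j := by
          rw [← Finset.sum_add_distrib]
          exact Finset.sum_congr rfl fun j _ => (add_smul _ _ _).symm
  rw [key]
  exact Submodule.sum_mem _ fun j _ =>
    Submodule.smul_mem _ _ (Submodule.subset_span ⟨j, rfl⟩)

end BB
end

section
/- For the Schoen example (Δ = [-1,1] × T × T ⊆ ℝ⁵ with T the standard reflexive triangle Conv{(-1,-1),(2,-1),(-1,2)}, and nef-partition Δ₁ = [0,1] × T × {0}, Δ₂ = [-1,0] × {0} × T), the dual nef-partition data is ∇₁ = Conv{0, R⁻, S₀, S₁, S₂} and ∇₂ = Conv{0, R⁺, T₀, T₁, T₂}, and ∇ = ∇₁ + ∇₂ = Conv{R⁻ + T_j, R⁺ + S_i, S_i + T_j | i,j = 0,1,2}, where R^± = (±1,0,0,0,0), S₀ = (0,-1,-1,0,0), S₁ = (0,1,0,0,0), S₂ = (0,0,1,0,0), T₀ = (0,0,0,-1,-1), T₁ = (0,0,0,1,0), T₂ = (0,0,0,0,1). -/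
/-! The support function of `T` is `h(a, b) = max (a + b) (max (-2a + b) (a - 2b))`, the largest
value of `-⟨x, (a, b)⟩` over its three vertices. Since `Δ`, `Δ₁`, `Δ₂` are products, their support
functions are sums over the factors: `φ₁ v = max 0 (-v₀) + h(v₁, v₂)`, `φ₂ v = max 0 v₀ + h(v₃, v₄)`
and `Δ* = {v | |v₀| + h(v₁, v₂) + h(v₃, v₄) ≤ 1}`. The three linear forms in `h` sum to zero, so
`h ≥ 0` with equality only at the origin. Hence a point of `Δ*` with `φ₁ = 1` has `v₀ ≤ 0` and
`v₃ = v₄ = 0`; its barycentric coordinates in `Conv{R⁻, S₀, S₁, S₂}` are `-v₀` and the gaps between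
`h(v₁, v₂)` and the three forms, divided by `3`. Conversely each of the eight points is the only
point of `Δ*` where some `m ∈ Δ` attains `⟨m, ·⟩ = -1`, hence a vertex of `Δ*`. Finally `∇₁ + ∇₂`
is the hull of the pairwise sums of generators; as `∑ Sᵢ = ∑ Tⱼ = 0 = R⁻ + R⁺`, the sums involving
`0` or `R⁻ + R⁺` are barycentres of the others. -/

open scoped Pointwise

namespace BB

/-- The standard reflexive triangle `T = Conv{(-1,-1),(2,-1),(-1,2)} ⊆ ℝ²`. -/
noncomputable def Ttri : Set (V 2) :=
  convexHull ℝ {![(-1 : ℝ), -1], ![2, -1], ![-1, 2]}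

/-- `Δ = [-1,1] × T × T ⊆ ℝ⁵`. -/
noncomputable def Δ19 : Set (V 5) :=
  {v | v 0 ∈ Set.Icc (-1 : ℝ) 1 ∧ ![v 1, v 2] ∈ Ttri ∧ ![v 3, v 4] ∈ Ttri}

/-- The nef-partition `Δ₁ = [0,1] × T × {0}`, `Δ₂ = [-1,0] × {0} × T`. -/
noncomputable def D19 : Fin 2 → Set (V 5) :=
  ![{v | v 0 ∈ Set.Icc (0 : ℝ) 1 ∧ ![v 1, v 2] ∈ Ttri ∧ v 3 = 0 ∧ v 4 = 0},
    {v | v 0 ∈ Set.Icc (-1 : ℝ) 0 ∧ v 1 = 0 ∧ v 2 = 0 ∧ ![v 3, v 4] ∈ Ttri}]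

def Rp : V 5 := ![1, 0, 0, 0, 0]
def Rm : V 5 := ![-1, 0, 0, 0, 0]
def Spt : Fin 3 → V 5 := ![![0, -1, -1, 0, 0], ![0, 1, 0, 0, 0], ![0, 0, 1, 0, 0]]
def Tpt : Fin 3 → V 5 := ![![0, 0, 0, -1, -1], ![0, 0, 0, 1, 0], ![0, 0, 0, 0, 1]]

/-- The dual nef-partition data: `∇ᵢ = Conv({0} ∪ {e ∈ Σ(1) | φᵢ(e) = 1})`, where
the ray generators `Σ(1)` are the vertices of `Δ*` and `φᵢ` is the support
function of `Δᵢ`. -/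
noncomputable def Nb19 (i : Fin 2) : Set (V 5) :=
  convexHull ℝ
    ({0} ∪ {e ∈ Set.extremePoints ℝ (polar Δ19) | supp (D19 i) e = 1})


open Set

theorem convexHull_eq_of_subset_of_subset_convexHull {𝕜 E : Type*} [Semiring 𝕜] [PartialOrder 𝕜]
    [AddCommMonoid E] [Module 𝕜 E] {s t : Set E} (hst : s ⊆ t)
    (hts : t ⊆ convexHull 𝕜 s) : convexHull 𝕜 t = convexHull 𝕜 s :=
  (convexHull_min hts (convex_convexHull 𝕜 s)).antisymm (convexHull_mono hst)

theorem _root_.Convex.mem_of_add_mem_of_sum_eq_zero {𝕜 E ι : Type*} [Field 𝕜] [LinearOrder 𝕜]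
    [IsStrictOrderedRing 𝕜] [AddCommGroup E] [Module 𝕜 E] [Fintype ι] [Nonempty ι] {s : Set E}
    (hs : Convex 𝕜 s) {x : E} {t : ι → E} (hx : ∀ i, x + t i ∈ s) (ht : ∑ i, t i = 0) :
    x ∈ s := by
  have hcard : (Fintype.card ι : 𝕜) ≠ 0 := Nat.cast_ne_zero.2 Fintype.card_ne_zero
  have hmem := hs.sum_mem (t := Finset.univ) (w := fun _ => (Fintype.card ι : 𝕜)⁻¹)
    (fun _ _ => by positivity) (by simp [hcard]) (fun i _ => hx i)
  have hcentroid : ∑ i, (Fintype.card ι : 𝕜)⁻¹ • (x + t i) = x := by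
    rw [← Finset.smul_sum, Finset.sum_add_distrib, ht, add_zero, Finset.sum_const,
      Finset.card_univ, ← Nat.cast_smul_eq_nsmul 𝕜, smul_smul, inv_mul_cancel₀ hcard, one_smul]
  rwa [hcentroid] at hmem

theorem mem_insert_insert_fin_three {α : Type*} {a b x : α} {f : Fin 3 → α} :
    x ∈ ({a, b, f 0, f 1, f 2} : Set α) ↔ x = a ∨ x = b ∨ ∃ i, f i = x := by
  simp only [mem_insert_iff, mem_singleton_iff, Fin.exists_fin_succ, Fin.succ_zero_eq_one,
    Fin.succ_one_eq_two, IsEmpty.exists_iff, or_false]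
  tauto

section Polar

variable {n : ℕ}

theorem isLinearMap_pair_left (v : V n) : IsLinearMap ℝ (fun m => pair m v) :=
  ⟨fun x y => add_dotProduct x y v, fun c x => smul_dotProduct c x v⟩

theorem pair_smul_add_smul (m x y : V n) (a b : ℝ) :
    pair m (a • x + b • y) = a * pair m x + b * pair m y := by
  change m ⬝ᵥ (a • x + b • y) = a * (m ⬝ᵥ x) + b * (m ⬝ᵥ y)
  simp only [dotProduct_add, dotProduct_smul, smul_eq_mul]

theorem mem_polar_iff_of_isGreatest {P : Set (V n)} {v : V n} {s : ℝ}
    (h : IsGreatest ((fun m => -pair m v) '' P) s) : v ∈ polar P ↔ s ≤ 1 := by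
  constructor
  · obtain ⟨m, hm, rfl⟩ := h.1
    intro hv
    linarith [hv m hm]
  · intro hs m hm
    linarith [h.2 (mem_image_of_mem _ hm)]

theorem mem_extremePoints_polar_of_unique {P : Set (V n)} {m v : V n} (hm : m ∈ P)
    (hv : v ∈ polar P) (hmv : pair m v = -1) (huniq : ∀ w ∈ polar P, pair m w = -1 → w = v) :
    v ∈ (polar P).extremePoints ℝ := by
  refine mem_extremePoints.2 ⟨hv, fun x hx y hy ⟨a, b, ha, hb, hab, hxy⟩ => ?_⟩
  have hsum : a * pair m x + b * pair m y = -1 := by rw [← pair_smul_add_smul, hxy, hmv]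
  have hx1 := hx m hm
  have hy1 := hy m hm
  exact ⟨huniq x hx (by nlinarith), huniq y hy (by nlinarith)⟩

end Polar

def suppTtri (a b : ℝ) : ℝ := max (a + b) (max (-2 * a + b) (a - 2 * b))

theorem le_suppTtri (a b : ℝ) :
    a + b ≤ suppTtri a b ∧ -2 * a + b ≤ suppTtri a b ∧ a - 2 * b ≤ suppTtri a b := by
  simp only [suppTtri, le_max_iff, le_refl, true_or, or_true, and_self]

theorem isGreatest_suppTtri (a b : ℝ) :
    IsGreatest ((fun x => -pair x ![a, b]) '' Ttri) (suppTtri a b) := by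
  refine ⟨?_, ?_⟩
  · obtain ⟨x, hx, hxab⟩ : ∃ x ∈ ({![(-1 : ℝ), -1], ![2, -1], ![-1, 2]} : Set (V 2)),
        -pair x ![a, b] = suppTtri a b := by
      simp only [suppTtri, pair, Fin.sum_univ_two]
      rcases max_choice (a + b) (max (-2 * a + b) (a - 2 * b)) with h | h <;> rw [h]
      · exact ⟨_, Or.inl rfl, by simp only [Matrix.cons_val]; ring⟩
      rcases max_choice (-2 * a + b) (a - 2 * b) with h | h <;> rw [h]
      · exact ⟨_, Or.inr (Or.inl rfl), by simp only [Matrix.cons_val]; ring⟩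
      · exact ⟨_, Or.inr (Or.inr rfl), by simp only [Matrix.cons_val]; ring⟩
    exact ⟨x, subset_convexHull ℝ _ hx, hxab⟩
  · have hvert : {![(-1 : ℝ), -1], ![2, -1], ![-1, 2]} ⊆
        {x : V 2 | -suppTtri a b ≤ pair x ![a, b]} := by
      obtain ⟨h₁, h₂, h₃⟩ := le_suppTtri a b
      rintro x (rfl | rfl | rfl) <;>
        simp only [pair, Fin.sum_univ_two, Matrix.cons_val, mem_ofPred_eq] <;> linarith
    rintro _ ⟨x, hx, rfl⟩
    have := convexHull_min hvert (convex_halfSpace_ge (isLinearMap_pair_left _) _) hx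
    simp only [mem_ofPred_eq] at this
    linarith

theorem mem_Ttri_iff (x : V 2) : x ∈ Ttri ↔ -1 ≤ x 0 ∧ -1 ≤ x 1 ∧ x 0 + x 1 ≤ 1 := by
  constructor
  · intro hx
    have bound := fun a b => (isGreatest_suppTtri a b).2 (mem_image_of_mem _ hx)
    have h₁ := bound 1 0
    have h₂ := bound 0 1
    have h₃ := bound (-1) (-1)
    norm_num [suppTtri, pair] at h₁ h₂ h₃
    exact ⟨by linarith, by linarith, by linarith⟩
  · rintro ⟨h₀, h₁, h₂⟩
    have hmem := (convex_convexHull ℝ {![(-1 : ℝ), -1], ![2, -1], ![-1, 2]}).sum_mem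
      (t := Finset.univ) (w := ![(1 - x 0 - x 1) / 3, (x 0 + 1) / 3, (x 1 + 1) / 3])
      (z := ![![(-1 : ℝ), -1], ![2, -1], ![-1, 2]])
      (fun i _ => by fin_cases i <;> simp only [Fin.reduceFinMk, Matrix.cons_val] <;> linarith)
      (by simp only [Fin.sum_univ_three, Matrix.cons_val]; ring)
      (fun i _ => by fin_cases i <;> exact subset_convexHull ℝ _ (by simp))
    rw [Ttri]
    convert hmem using 1
    ext k; fin_cases k <;>
      simp only [Fin.reduceFinMk, Finset.sum_apply, Pi.smul_apply, smul_eq_mul, Fin.sum_univ_three,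
        Matrix.cons_val] <;> ring

theorem isGreatest_neg_mul_Icc {a b : ℝ} (hab : a ≤ b) (c : ℝ) :
    IsGreatest ((fun t => -(t * c)) '' Icc a b) (max (-(a * c)) (-(b * c))) := by
  refine ⟨?_, ?_⟩
  · rcases max_choice (-(a * c)) (-(b * c)) with h | h <;> rw [h]
    exacts [mem_image_of_mem _ (left_mem_Icc.2 hab), mem_image_of_mem _ (right_mem_Icc.2 hab)]
  · rintro _ ⟨t, ⟨hat, htb⟩, rfl⟩
    rcases le_total 0 c with hc | hc
    · exact le_max_of_le_left (by nlinarith)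
    · exact le_max_of_le_right (by nlinarith)

theorem isGreatest_neg_pair_zero (w : V 2) : IsGreatest ((fun x => -pair x w) '' {0}) 0 := by
  simp [pair]

theorem isGreatest_neg_pair_block {I : Set ℝ} {A B : Set (V 2)} {v : V 5} {a b c : ℝ}
    (hI : IsGreatest ((fun t => -(t * v 0)) '' I) a)
    (hA : IsGreatest ((fun x => -pair x ![v 1, v 2]) '' A) b)
    (hB : IsGreatest ((fun y => -pair y ![v 3, v 4]) '' B) c) :
    IsGreatest ((fun m => -pair m v) '' {m | m 0 ∈ I ∧ ![m 1, m 2] ∈ A ∧ ![m 3, m 4] ∈ B})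
      (a + b + c) := by
  refine ⟨?_, ?_⟩
  · obtain ⟨t, ht, rfl⟩ := hI.1
    obtain ⟨x, hx, rfl⟩ := hA.1
    obtain ⟨y, hy, rfl⟩ := hB.1
    have hx' : ![x 0, x 1] = x := by ext i; fin_cases i <;> rfl
    have hy' : ![y 0, y 1] = y := by ext i; fin_cases i <;> rfl
    refine ⟨![t, x 0, x 1, y 0, y 1], ⟨ht, ?_, ?_⟩, ?_⟩
    · simpa [hx'] using hx
    · simpa [hy'] using hy
    · simp only [pair, Fin.sum_univ_five, Fin.sum_univ_two, Matrix.cons_val]; ring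
  · rintro _ ⟨m, ⟨hm0, hmA, hmB⟩, rfl⟩
    have h₁ : -(m 0 * v 0) ≤ a := hI.2 (mem_image_of_mem _ hm0)
    have h₂ := hA.2 (mem_image_of_mem _ hmA)
    have h₃ := hB.2 (mem_image_of_mem _ hmB)
    simp only [pair, Fin.sum_univ_five, Fin.sum_univ_two, Matrix.cons_val] at h₂ h₃ ⊢
    linarith

theorem supp_D19_zero (v : V 5) :
    supp (D19 0) v = max 0 (-v 0) + suppTtri (v 1) (v 2) := by
  have hD : D19 0 =
      {m | m 0 ∈ Icc 0 1 ∧ ![m 1, m 2] ∈ Ttri ∧ ![m 3, m 4] ∈ ({0} : Set (V 2))} := by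
    ext m; simp [D19]
  have h := isGreatest_neg_pair_block (isGreatest_neg_mul_Icc zero_le_one (v 0))
    (isGreatest_suppTtri (v 1) (v 2)) (isGreatest_neg_pair_zero _)
  rw [supp, hD, h.csSup_eq]
  simp

theorem supp_D19_one (v : V 5) :
    supp (D19 1) v = max 0 (v 0) + suppTtri (v 3) (v 4) := by
  have hD : D19 1 =
      {m | m 0 ∈ Icc (-1) 0 ∧ ![m 1, m 2] ∈ ({0} : Set (V 2)) ∧ ![m 3, m 4] ∈ Ttri} := by
    ext m; simp [D19, and_assoc]
  have h := isGreatest_neg_pair_block (isGreatest_neg_mul_Icc (neg_nonpos.2 zero_le_one) (v 0))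
    (isGreatest_neg_pair_zero _) (isGreatest_suppTtri (v 3) (v 4))
  rw [supp, hD, h.csSup_eq]
  simp [max_comm]

theorem mem_polar_Δ19_iff (v : V 5) :
    v ∈ polar Δ19 ↔ |v 0| + suppTtri (v 1) (v 2) + suppTtri (v 3) (v 4) ≤ 1 := by
  have h := isGreatest_neg_pair_block (isGreatest_neg_mul_Icc (by norm_num : (-1 : ℝ) ≤ 1) (v 0))
    (isGreatest_suppTtri (v 1) (v 2)) (isGreatest_suppTtri (v 3) (v 4))
  refine (mem_polar_iff_of_isGreatest h).trans ?_
  simp [abs_eq_max_neg]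

theorem sum_Spt : ∑ i, Spt i = 0 := by
  ext k; fin_cases k <;> simp [Spt, Fin.sum_univ_three]

theorem sum_Tpt : ∑ j, Tpt j = 0 := by
  ext k; fin_cases k <;> simp [Tpt, Fin.sum_univ_three]

theorem Rm_add_Rp : Rm + Rp = 0 := by
  ext k; fin_cases k <;> simp [Rm, Rp]

theorem Rm_mem_extremePoints : Rm ∈ (polar Δ19).extremePoints ℝ := by
  refine mem_extremePoints_polar_of_unique (m := ![1, 0, 0, 0, 0]) ?_ ?_ ?_ ?_
  · simp [Δ19, mem_Ttri_iff]
  · simp [mem_polar_Δ19_iff, suppTtri, Rm]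
  · simp [pair, Fin.sum_univ_five, Rm]
  · intro w hw hmw
    rw [mem_polar_Δ19_iff] at hw
    obtain ⟨h₁, h₂, h₃⟩ := le_suppTtri (w 1) (w 2)
    obtain ⟨h₄, h₅, h₆⟩ := le_suppTtri (w 3) (w 4)
    simp only [pair, Fin.sum_univ_five, Matrix.cons_val] at hmw
    ext k; fin_cases k <;> simp only [Fin.reduceFinMk, Matrix.cons_val, Rm] <;>
      linarith [le_abs_self (w 0), neg_abs_le (w 0)]

theorem Rp_mem_extremePoints : Rp ∈ (polar Δ19).extremePoints ℝ := by
  refine mem_extremePoints_polar_of_unique (m := ![-1, 0, 0, 0, 0]) ?_ ?_ ?_ ?_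
  · simp [Δ19, mem_Ttri_iff]
  · simp [mem_polar_Δ19_iff, suppTtri, Rp]
  · simp [pair, Fin.sum_univ_five, Rp]
  · intro w hw hmw
    rw [mem_polar_Δ19_iff] at hw
    obtain ⟨h₁, h₂, h₃⟩ := le_suppTtri (w 1) (w 2)
    obtain ⟨h₄, h₅, h₆⟩ := le_suppTtri (w 3) (w 4)
    simp only [pair, Fin.sum_univ_five, Matrix.cons_val] at hmw
    ext k; fin_cases k <;> simp only [Fin.reduceFinMk, Matrix.cons_val, Rp] <;>
      linarith [le_abs_self (w 0), neg_abs_le (w 0)]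

theorem Spt_mem_extremePoints (i : Fin 3) : Spt i ∈ (polar Δ19).extremePoints ℝ := by
  refine mem_extremePoints_polar_of_unique
    (m := ![![0, 1, 0, 0, 0], ![0, -1, 0, 0, 0], ![0, 0, -1, 0, 0]] i) ?_ ?_ ?_ ?_
  · fin_cases i <;> simp [Δ19, mem_Ttri_iff]
  · fin_cases i <;> simp [mem_polar_Δ19_iff, suppTtri, Spt] <;> norm_num
  · fin_cases i <;> simp [pair, Fin.sum_univ_five, Spt]
  · intro w hw hmw
    rw [mem_polar_Δ19_iff] at hw
    obtain ⟨h₁, h₂, h₃⟩ := le_suppTtri (w 1) (w 2)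
    obtain ⟨h₄, h₅, h₆⟩ := le_suppTtri (w 3) (w 4)
    fin_cases i <;> simp only [pair, Fin.sum_univ_five, Fin.reduceFinMk, Matrix.cons_val] at hmw <;>
      ext k <;> fin_cases k <;> simp only [Fin.reduceFinMk, Matrix.cons_val, Spt] <;>
      linarith [le_abs_self (w 0), neg_abs_le (w 0)]

theorem Tpt_mem_extremePoints (j : Fin 3) : Tpt j ∈ (polar Δ19).extremePoints ℝ := by
  refine mem_extremePoints_polar_of_unique
    (m := ![![0, 0, 0, 1, 0], ![0, 0, 0, -1, 0], ![0, 0, 0, 0, -1]] j) ?_ ?_ ?_ ?_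
  · fin_cases j <;> simp [Δ19, mem_Ttri_iff]
  · fin_cases j <;> simp [mem_polar_Δ19_iff, suppTtri, Tpt] <;> norm_num
  · fin_cases j <;> simp [pair, Fin.sum_univ_five, Tpt]
  · intro w hw hmw
    rw [mem_polar_Δ19_iff] at hw
    obtain ⟨h₁, h₂, h₃⟩ := le_suppTtri (w 1) (w 2)
    obtain ⟨h₄, h₅, h₆⟩ := le_suppTtri (w 3) (w 4)
    fin_cases j <;> simp only [pair, Fin.sum_univ_five, Fin.reduceFinMk, Matrix.cons_val] at hmw <;>
      ext k <;> fin_cases k <;> simp only [Fin.reduceFinMk, Matrix.cons_val, Tpt] <;>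
      linarith [le_abs_self (w 0), neg_abs_le (w 0)]

theorem supp_D19_zero_Rm : supp (D19 0) Rm = 1 := by
  simp [supp_D19_zero, suppTtri, Rm]

theorem supp_D19_zero_Spt (i : Fin 3) : supp (D19 0) (Spt i) = 1 := by
  fin_cases i <;> simp [supp_D19_zero, suppTtri, Spt] <;> norm_num

theorem supp_D19_one_Rp : supp (D19 1) Rp = 1 := by
  simp [supp_D19_one, suppTtri, Rp]

theorem supp_D19_one_Tpt (j : Fin 3) : supp (D19 1) (Tpt j) = 1 := by
  fin_cases j <;> simp [supp_D19_one, suppTtri, Tpt] <;> norm_num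

theorem mem_convexHull_of_supp_D19_zero_eq_one {v : V 5} (hv : v ∈ polar Δ19)
    (hs : supp (D19 0) v = 1) : v ∈ convexHull ℝ {Rm, Spt 0, Spt 1, Spt 2} := by
  rw [mem_polar_Δ19_iff] at hv
  rw [supp_D19_zero] at hs
  obtain ⟨h₁, h₂, h₃⟩ := le_suppTtri (v 1) (v 2)
  obtain ⟨h₄, h₅, h₆⟩ := le_suppTtri (v 3) (v 4)
  have hv0 : v 0 ≤ 0 := by
    by_contra! h
    rw [abs_of_pos h] at hv
    rw [max_eq_left (by linarith)] at hs
    linarith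
  rw [abs_of_nonpos hv0] at hv
  rw [max_eq_right (by linarith)] at hs
  have hv3 : v 3 = 0 := by linarith
  have hv4 : v 4 = 0 := by linarith
  set s := suppTtri (v 1) (v 2)
  have hmem := (convex_convexHull ℝ {Rm, Spt 0, Spt 1, Spt 2}).sum_mem (t := Finset.univ)
    (w := ![-v 0, (s - (v 1 + v 2)) / 3, (s - (-2 * v 1 + v 2)) / 3, (s - (v 1 - 2 * v 2)) / 3])
    (z := ![Rm, Spt 0, Spt 1, Spt 2])
    (fun i _ => by fin_cases i <;> simp only [Fin.reduceFinMk, Matrix.cons_val] <;> linarith)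
    (by simp only [Fin.sum_univ_four, Matrix.cons_val]; linarith)
    (fun i _ => by fin_cases i <;> exact subset_convexHull ℝ _ (by simp))
  convert hmem using 1
  ext k; fin_cases k <;>
    simp only [Fin.reduceFinMk, Finset.sum_apply, Pi.smul_apply, smul_eq_mul, Fin.sum_univ_four,
      Matrix.cons_val, Rm, Spt, hv3, hv4] <;> ring

theorem mem_convexHull_of_supp_D19_one_eq_one {v : V 5} (hv : v ∈ polar Δ19)
    (hs : supp (D19 1) v = 1) : v ∈ convexHull ℝ {Rp, Tpt 0, Tpt 1, Tpt 2} := by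
  rw [mem_polar_Δ19_iff] at hv
  rw [supp_D19_one] at hs
  obtain ⟨h₁, h₂, h₃⟩ := le_suppTtri (v 1) (v 2)
  obtain ⟨h₄, h₅, h₆⟩ := le_suppTtri (v 3) (v 4)
  have hv0 : 0 ≤ v 0 := by
    by_contra! h
    rw [abs_of_neg h] at hv
    rw [max_eq_left (by linarith)] at hs
    linarith
  rw [abs_of_nonneg hv0] at hv
  rw [max_eq_right hv0] at hs
  have hv1 : v 1 = 0 := by linarith
  have hv2 : v 2 = 0 := by linarith
  set t := suppTtri (v 3) (v 4)
  have hmem := (convex_convexHull ℝ {Rp, Tpt 0, Tpt 1, Tpt 2}).sum_mem (t := Finset.univ)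
    (w := ![v 0, (t - (v 3 + v 4)) / 3, (t - (-2 * v 3 + v 4)) / 3, (t - (v 3 - 2 * v 4)) / 3])
    (z := ![Rp, Tpt 0, Tpt 1, Tpt 2])
    (fun i _ => by fin_cases i <;> simp only [Fin.reduceFinMk, Matrix.cons_val] <;> linarith)
    (by simp only [Fin.sum_univ_four, Matrix.cons_val]; linarith)
    (fun i _ => by fin_cases i <;> exact subset_convexHull ℝ _ (by simp))
  convert hmem using 1
  ext k; fin_cases k <;>
    simp only [Fin.reduceFinMk, Finset.sum_apply, Pi.smul_apply, smul_eq_mul, Fin.sum_univ_four,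
      Matrix.cons_val, Rp, Tpt, hv1, hv2] <;> ring

theorem Nb19_zero : Nb19 0 = convexHull ℝ {0, Rm, Spt 0, Spt 1, Spt 2} := by
  refine convexHull_eq_of_subset_of_subset_convexHull ?_ ?_
  · intro x hx
    rcases mem_insert_insert_fin_three.1 hx with rfl | rfl | ⟨i, rfl⟩
    · exact Or.inl rfl
    · exact Or.inr ⟨Rm_mem_extremePoints, supp_D19_zero_Rm⟩
    · exact Or.inr ⟨Spt_mem_extremePoints i, supp_D19_zero_Spt i⟩
  · rintro x (rfl | ⟨hx, hs⟩)
    · exact subset_convexHull ℝ _ (mem_insert _ _)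
    · exact convexHull_mono (subset_insert _ _)
        (mem_convexHull_of_supp_D19_zero_eq_one hx.1 hs)

theorem Nb19_one : Nb19 1 = convexHull ℝ {0, Rp, Tpt 0, Tpt 1, Tpt 2} := by
  refine convexHull_eq_of_subset_of_subset_convexHull ?_ ?_
  · intro x hx
    rcases mem_insert_insert_fin_three.1 hx with rfl | rfl | ⟨j, rfl⟩
    · exact Or.inl rfl
    · exact Or.inr ⟨Rp_mem_extremePoints, supp_D19_one_Rp⟩
    · exact Or.inr ⟨Tpt_mem_extremePoints j, supp_D19_one_Tpt j⟩
  · rintro x (rfl | ⟨hx, hs⟩)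
    · exact subset_convexHull ℝ _ (mem_insert _ _)
    · exact convexHull_mono (subset_insert _ _)
        (mem_convexHull_of_supp_D19_one_eq_one hx.1 hs)

def Nb19Pts : Set (V 5) :=
  (Set.range fun j : Fin 3 => Rm + Tpt j)
    ∪ (Set.range fun i : Fin 3 => Rp + Spt i)
    ∪ (Set.range fun ij : Fin 3 × Fin 3 => Spt ij.1 + Tpt ij.2)

theorem add_mem_convexHull_Nb19Pts {a b : V 5} (ha : a ∈ ({0, Rm, Spt 0, Spt 1, Spt 2} : Set (V 5)))
    (hb : b ∈ ({0, Rp, Tpt 0, Tpt 1, Tpt 2} : Set (V 5))) : a + b ∈ convexHull ℝ Nb19Pts := by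
  have hK : Convex ℝ (convexHull ℝ Nb19Pts) := convex_convexHull ℝ Nb19Pts
  have hRmT (j : Fin 3) : Rm + Tpt j ∈ convexHull ℝ Nb19Pts :=
    subset_convexHull ℝ _ (Or.inl (Or.inl ⟨j, rfl⟩))
  have hSRp (i : Fin 3) : Spt i + Rp ∈ convexHull ℝ Nb19Pts :=
    subset_convexHull ℝ _ (Or.inl (Or.inr ⟨i, add_comm _ _⟩))
  have hST (i j : Fin 3) : Spt i + Tpt j ∈ convexHull ℝ Nb19Pts :=
    subset_convexHull ℝ _ (Or.inr ⟨(i, j), rfl⟩)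
  have hRm := hK.mem_of_add_mem_of_sum_eq_zero hRmT sum_Tpt
  have hRp := hK.mem_of_add_mem_of_sum_eq_zero (fun i => add_comm Rp (Spt i) ▸ hSRp i) sum_Spt
  have hS (i : Fin 3) := hK.mem_of_add_mem_of_sum_eq_zero (hST i) sum_Tpt
  have hT (j : Fin 3) := hK.mem_of_add_mem_of_sum_eq_zero
    (fun i => add_comm (Spt i) (Tpt j) ▸ hST i j) sum_Spt
  have h0 := hK.mem_of_add_mem_of_sum_eq_zero (fun i => (zero_add (Spt i)).symm ▸ hS i) sum_Spt
  rcases mem_insert_insert_fin_three.1 ha with rfl | rfl | ⟨i, rfl⟩ <;>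
    rcases mem_insert_insert_fin_three.1 hb with rfl | rfl | ⟨j, rfl⟩
  · simpa using h0
  · simpa using hRp
  · simpa using hT j
  · simpa using hRm
  · simpa [Rm_add_Rp] using h0
  · exact hRmT j
  · simpa using hS i
  · exact hSRp i
  · exact hST i j

theorem Nb19_add : Nb19 0 + Nb19 1 = convexHull ℝ Nb19Pts := by
  rw [Nb19_zero, Nb19_one, ← convexHull_add]
  refine convexHull_eq_of_subset_of_subset_convexHull ?_ ?_
  · have hS (i : Fin 3) : Spt i ∈ ({0, Rm, Spt 0, Spt 1, Spt 2} : Set (V 5)) :=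
      mem_insert_insert_fin_three.2 (.inr (.inr ⟨i, rfl⟩))
    have hT (j : Fin 3) : Tpt j ∈ ({0, Rp, Tpt 0, Tpt 1, Tpt 2} : Set (V 5)) :=
      mem_insert_insert_fin_three.2 (.inr (.inr ⟨j, rfl⟩))
    rintro _ ((⟨j, rfl⟩ | ⟨i, rfl⟩) | ⟨⟨i, j⟩, rfl⟩) <;> dsimp only
    · exact add_mem_add (by simp) (hT j)
    · rw [add_comm Rp]
      exact add_mem_add (hS i) (by simp)
    · exact add_mem_add (hS i) (hT j)
  · rintro _ ⟨a, ha, b, hb, rfl⟩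
    exact add_mem_convexHull_Nb19Pts ha hb

theorem stmt19 :
    Nb19 0 = convexHull ℝ {0, Rm, Spt 0, Spt 1, Spt 2} ∧
    Nb19 1 = convexHull ℝ {0, Rp, Tpt 0, Tpt 1, Tpt 2} ∧
    Nb19 0 + Nb19 1
      = convexHull ℝ
          ((Set.range fun j : Fin 3 => Rm + Tpt j)
            ∪ (Set.range fun i : Fin 3 => Rp + Spt i)
            ∪ (Set.range fun ij : Fin 3 × Fin 3 => Spt ij.1 + Tpt ij.2)) :=
  ⟨Nb19_zero, Nb19_one, Nb19_add⟩

end BB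
end
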